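/- Let {x^k} be a sequence of componentwise positive vectors in ℝ^N with ∑_{j=1}^N x_j^k = ∑_{i=1}^M b_i for all k, generated by the perturbed EM iteration x^{k+1} = P(y^k) with y^k = x^k + β_k v^k > 0 componentwise, where β_k ≥ 0 with β_k → 0 and {v^k} is a bounded sequence in ℝ^N, and suppose the sequence {I_A^b(x^k)} is nonincreasing. Then {x^k} has a convergent subsequence; moreover, if x̂ is the limit of any convergent subsequence of {x^k} and d_i(x̂) > 0 for all i, then x̂ is a fixed point of the EM operator, i.e. P(x̂) = x̂. -/

import Mathlib

/-! The EM step decreases `I_A^b` by at least a Kullback–Leibler divergence: by Jensen's inequality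
for the logarithm on each row, `I(P y) + KL(P y, y) ≤ I(y)`. Mass conservation keeps the iterates in
a box, which gives the convergent subsequence. Along a subsequence `x^{φ k} → x̂` the perturbations
vanish, so also `y^{φ k} → x̂`, and since `I(x^k)` converges, `KL(P y^{φ k}, y^{φ k}) → 0`. In
the limit `∑ j, x̂_j klFun(f_j(x̂)) = 0`, i.e. each `x̂_j = 0` or `f_j(x̂) = 1`: `x̂` is a fixed
point. -/

open Finset Filter Topology

noncomputable def dd {M N : ℕ} (A : Fin M → Fin N → ℝ) (x : Fin N → ℝ) (i : Fin M) : ℝ :=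
  ∑ j, A i j * x j

noncomputable def ff {M N : ℕ} (A : Fin M → Fin N → ℝ) (b : Fin M → ℝ) (x : Fin N → ℝ) (j : Fin N) : ℝ :=
  ∑ i, A i j * b i / dd A x i

noncomputable def EMop {M N : ℕ} (A : Fin M → Fin N → ℝ) (b : Fin M → ℝ) (x : Fin N → ℝ) : Fin N → ℝ :=
  fun j => x j * ff A b x j

noncomputable def KL {N : ℕ} (u v : Fin N → ℝ) : ℝ :=
  (∑ j, u j * Real.log (u j / v j)) - ∑ j, (u j - v j)

noncomputable def IAb {M N : ℕ} (A : Fin M → Fin N → ℝ) (b : Fin M → ℝ) (x : Fin N → ℝ) : ℝ :=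
  (∑ i, b i * Real.log (b i / dd A x i)) - ∑ i, (b i - dd A x i)

noncomputable def finSup0 {ι : Type*} (s : Finset ι) (g : ι → ℝ) : ℝ :=
  if h : s.Nonempty then s.sup' h g else 0

noncomputable def finInf0 {ι : Type*} (s : Finset ι) (g : ι → ℝ) : ℝ :=
  if h : s.Nonempty then s.inf' h g else 0

open InformationTheory

section EM
variable {M N : ℕ} {A : Fin M → Fin N → ℝ} {b : Fin M → ℝ}

lemma dd_pos (hA : ∀ i j, 0 ≤ A i j) (hrow : ∀ i, ∃ j, 0 < A i j) {x : Fin N → ℝ}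
    (hx : ∀ j, 0 < x j) (i : Fin M) : 0 < dd A x i := by
  obtain ⟨j, hj⟩ := hrow i
  exact Finset.sum_pos' (fun j _ => mul_nonneg (hA i j) (hx j).le)
    ⟨j, mem_univ j, mul_pos hj (hx j)⟩

lemma ff_pos (hA : ∀ i j, 0 ≤ A i j) (hcol : ∀ j, ∑ i, A i j = 1) (hb : ∀ i, 0 < b i)
    {x : Fin N → ℝ} (hd : ∀ i, 0 < dd A x i) (j : Fin N) : 0 < ff A b x j := by
  obtain ⟨i, hi⟩ : ∃ i, 0 < A i j := by
    by_contra! h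
    linarith [hcol j, Finset.sum_nonpos fun i (_ : i ∈ univ) => h i]
  exact Finset.sum_pos' (fun i _ => by have := hA i j; have := hb i; have := hd i; positivity)
    ⟨i, mem_univ i, div_pos (mul_pos hi (hb i)) (hd i)⟩

lemma sum_dd (hcol : ∀ j, ∑ i, A i j = 1) (x : Fin N → ℝ) : ∑ i, dd A x i = ∑ j, x j := by
  simp only [dd]
  rw [Finset.sum_comm]
  exact Finset.sum_congr rfl fun j _ => by rw [← Finset.sum_mul, hcol j, one_mul]

lemma IAb_nonneg (hb : ∀ i, 0 ≤ b i) {x : Fin N → ℝ} (hd : ∀ i, 0 < dd A x i) :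
    0 ≤ IAb A b x := by
  rw [IAb, ← Finset.sum_sub_distrib]
  refine Finset.sum_nonneg fun i _ => ?_
  calc 0 ≤ dd A x i * klFun (b i / dd A x i) :=
        mul_nonneg (hd i).le (klFun_nonneg (div_nonneg (hb i) (hd i).le))
    _ = b i * Real.log (b i / dd A x i) - (b i - dd A x i) := by
        have := (hd i).ne'
        rw [klFun_apply]; field_simp; ring

lemma IAb_sub_IAb (hcol : ∀ j, ∑ i, A i j = 1) (hb : ∀ i, 0 < b i) {y z : Fin N → ℝ}
    (hy : ∀ i, 0 < dd A y i) (hz : ∀ i, 0 < dd A z i) :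
    IAb A b y - IAb A b z
      = ∑ i, b i * Real.log (dd A z i / dd A y i) + (∑ j, y j - ∑ j, z j) := by
  have hlog : ∀ i, b i * Real.log (b i / dd A y i) - b i * Real.log (b i / dd A z i)
      = b i * Real.log (dd A z i / dd A y i) := fun i => by
    rw [Real.log_div (hb i).ne' (hy i).ne', Real.log_div (hb i).ne' (hz i).ne',
      Real.log_div (hz i).ne' (hy i).ne']
    ring
  simp only [IAb, Finset.sum_sub_distrib, ← sum_dd hcol, ← hlog]
  ring

lemma KL_EMop_eq_sum_klFun {y : Fin N → ℝ} (hy : ∀ j, 0 < y j) :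
    KL (EMop A b y) y = ∑ j, y j * klFun (ff A b y j) := by
  rw [KL, ← Finset.sum_sub_distrib]
  refine Finset.sum_congr rfl fun j _ => ?_
  rw [EMop, mul_div_cancel_left₀ _ (hy j).ne', klFun_apply]
  ring

/-- Jensen's inequality for the concave logarithm; the weights of row `i` sum to one. -/
lemma sum_mul_log_ff_le (hA : ∀ i j, 0 ≤ A i j) (hcol : ∀ j, ∑ i, A i j = 1)
    (hb : ∀ i, 0 < b i) {y : Fin N → ℝ} (hy : ∀ j, 0 < y j) (hd : ∀ i, 0 < dd A y i)
    (i : Fin M) :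
    ∑ j, A i j * y j / dd A y i * Real.log (ff A b y j)
      ≤ Real.log (dd A (EMop A b y) i / dd A y i) := by
  have hw : ∑ j, A i j * y j / dd A y i = 1 := by
    rw [← Finset.sum_div]; exact div_self (hd i).ne'
  have hmean : ∑ j, A i j * y j / dd A y i * ff A b y j = dd A (EMop A b y) i / dd A y i := by
    simp only [dd, EMop, Finset.sum_div]
    exact Finset.sum_congr rfl fun j _ => by ring
  have := strictConcaveOn_log_Ioi.concaveOn.le_map_sum
    (fun j _ => by have := hA i j; have := hy j; have := hd i; positivity) hw
    (fun j _ => ff_pos hA hcol hb hd j)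
  simpa only [smul_eq_mul, hmean] using this

lemma sum_EMop_mul_log_ff_le (hA : ∀ i j, 0 ≤ A i j) (hcol : ∀ j, ∑ i, A i j = 1)
    (hb : ∀ i, 0 < b i) {y : Fin N → ℝ} (hy : ∀ j, 0 < y j) (hd : ∀ i, 0 < dd A y i) :
    ∑ j, EMop A b y j * Real.log (ff A b y j)
      ≤ ∑ i, b i * Real.log (dd A (EMop A b y) i / dd A y i) := by
  have hsplit : ∑ j, EMop A b y j * Real.log (ff A b y j)
      = ∑ i, b i * ∑ j, A i j * y j / dd A y i * Real.log (ff A b y j) := by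
    simp only [EMop, ff, Finset.mul_sum, Finset.sum_mul]
    rw [Finset.sum_comm]
    exact Finset.sum_congr rfl fun i _ => Finset.sum_congr rfl fun j _ => by ring
  rw [hsplit]
  exact Finset.sum_le_sum fun i _ =>
    mul_le_mul_of_nonneg_left (sum_mul_log_ff_le hA hcol hb hy hd i) (hb i).le

lemma IAb_EMop_add_KL_le (hA : ∀ i j, 0 ≤ A i j) (hcol : ∀ j, ∑ i, A i j = 1)
    (hrow : ∀ i, ∃ j, 0 < A i j) (hb : ∀ i, 0 < b i) {y : Fin N → ℝ} (hy : ∀ j, 0 < y j) :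
    IAb A b (EMop A b y) + KL (EMop A b y) y ≤ IAb A b y := by
  have hd := dd_pos hA hrow hy
  have hP : ∀ j, 0 < EMop A b y j := fun j => mul_pos (hy j) (ff_pos hA hcol hb hd j)
  have hKL : KL (EMop A b y) y = ∑ j, EMop A b y j * Real.log (ff A b y j)
      + (∑ j, y j - ∑ j, EMop A b y j) := by
    simp only [KL_EMop_eq_sum_klFun hy, klFun_apply, EMop, ← Finset.sum_sub_distrib,
      ← Finset.sum_add_distrib]
    exact Finset.sum_congr rfl fun j _ => by ring
  linarith [IAb_sub_IAb hcol hb hd (dd_pos hA hrow hP), sum_EMop_mul_log_ff_le hA hcol hb hy hd]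

lemma continuous_dd (i : Fin M) : Continuous fun x : Fin N → ℝ => dd A x i := by
  unfold dd; fun_prop

lemma continuousAt_ff {x : Fin N → ℝ} (hd : ∀ i, 0 < dd A x i) (j : Fin N) :
    ContinuousAt (fun y => ff A b y j) x := by
  unfold ff
  exact tendsto_finsetSum _ fun i _ =>
    continuousAt_const.div (continuous_dd i).continuousAt (hd i).ne'

lemma continuousAt_IAb (hb : ∀ i, 0 < b i) {x : Fin N → ℝ} (hd : ∀ i, 0 < dd A x i) :
    ContinuousAt (IAb A b) x := by
  unfold IAb
  refine .sub (tendsto_finsetSum _ fun i _ => continuousAt_const.mul ?_)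
    (tendsto_finsetSum _ fun i _ => continuousAt_const.sub (continuous_dd i).continuousAt)
  exact (continuousAt_const.div (continuous_dd i).continuousAt (hd i).ne').log
    (div_pos (hb i) (hd i)).ne'

/-- Written as `∑ j, y j * klFun (ff A b y j)`, `KL (EMop A b y) y` is continuous in `y` wherever
`dd A y > 0`, also where `y` has zero coordinates, and it vanishes exactly at fixed points. -/
lemma EMop_eq_self_of_tendsto (hA : ∀ i j, 0 ≤ A i j) (hcol : ∀ j, ∑ i, A i j = 1)
    (hrow : ∀ i, ∃ j, 0 < A i j) (hb : ∀ i, 0 < b i) {y : ℕ → Fin N → ℝ} {x : Fin N → ℝ}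
    (hy : ∀ k j, 0 < y k j) (hlim : Tendsto y atTop (𝓝 x)) (hd : ∀ i, 0 < dd A x i)
    (hgap : Tendsto (fun k => IAb A b (y k) - IAb A b (EMop A b (y k))) atTop (𝓝 0)) :
    EMop A b x = x := by
  have hx : ∀ j, 0 ≤ x j := fun j =>
    ge_of_tendsto' (tendsto_pi_nhds.1 hlim j) fun k => (hy k j).le
  have hKL : Tendsto (fun k => KL (EMop A b (y k)) (y k)) atTop
      (𝓝 (∑ j, x j * klFun (ff A b x j))) := by
    simp only [KL_EMop_eq_sum_klFun (hy _)]
    exact tendsto_finsetSum _ fun j _ => (tendsto_pi_nhds.1 hlim j).mul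
      (continuous_klFun.continuousAt.tendsto.comp ((continuousAt_ff hd j).tendsto.comp hlim))
  have hterm : ∀ j, 0 ≤ x j * klFun (ff A b x j) := fun j =>
    mul_nonneg (hx j) (klFun_nonneg (ff_pos hA hcol hb hd j).le)
  have hsum : ∑ j, x j * klFun (ff A b x j) = 0 := by
    refine le_antisymm (le_of_tendsto_of_tendsto' hKL hgap fun k => ?_)
      (Finset.sum_nonneg fun j _ => hterm j)
    linarith [IAb_EMop_add_KL_le hA hcol hrow hb (hy k)]
  funext j
  rcases mul_eq_zero.1 ((Finset.sum_eq_zero_iff_of_nonneg fun j _ => hterm j).1 hsum j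
    (mem_univ j)) with h | h
  · simp [EMop, h]
  · simp [EMop, (klFun_eq_zero_iff (ff_pos hA hcol hb hd j).le).1 h]

lemma tendsto_mul_pi_of_tendsto_zero_of_bounded {β : ℕ → ℝ} {v : ℕ → Fin N → ℝ}
    (hβ : Tendsto β atTop (𝓝 0)) (hv : ∃ C : ℝ, ∀ k j, |v k j| ≤ C) :
    Tendsto (fun k j => β k * v k j) atTop (𝓝 0) := by
  obtain ⟨C, hC⟩ := hv
  exact tendsto_pi_nhds.2 fun j =>
    hβ.zero_mul_isBoundedUnder_le (isBoundedUnder_of ⟨C, fun k => hC k j⟩)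

end EM

theorem stmt_9_general
    (M N : ℕ)
    (A : Fin M → Fin N → ℝ) (b : Fin M → ℝ)
    (hA : ∀ i j, 0 ≤ A i j)
    (hcol : ∀ j, ∑ i, A i j = 1)
    (hrow : ∀ i, ∃ j, 0 < A i j)
    (hb : ∀ i, 0 < b i)
    (x y : ℕ → Fin N → ℝ) (β : ℕ → ℝ) (v : ℕ → Fin N → ℝ)
    (hx : ∀ k j, 0 < x k j)
    (hmass : ∀ k, (∑ j, x k j) = ∑ i, b i)
    (hy : ∀ k, y k = fun j => x k j + β k * v k j)
    (hypos : ∀ k j, 0 < y k j)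
    (hiter : ∀ k, x (k + 1) = EMop A b (y k))
    (hβ0 : Tendsto β atTop (nhds 0))
    (hvbd : ∃ C : ℝ, ∀ k j, |v k j| ≤ C)
    (hmono : Antitone (fun k => IAb A b (x k))) :
    (∃ φ : ℕ → ℕ, StrictMono φ ∧ ∃ l : Fin N → ℝ,
      Tendsto (fun k => x (φ k)) atTop (nhds l)) ∧
    (∀ xh : Fin N → ℝ, ∀ φ : ℕ → ℕ, StrictMono φ →
      Tendsto (fun k => x (φ k)) atTop (nhds xh) →
      (∀ i, 0 < dd A xh i) → EMop A b xh = xh) := by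
  constructor
  · have hbox : ∀ k, x k ∈ Set.Icc 0 (fun _ => ∑ i, b i) := fun k =>
      ⟨fun j => (hx k j).le, fun j => hmass k ▸
        Finset.single_le_sum (fun j _ => (hx k j).le) (mem_univ j)⟩
    obtain ⟨l, -, φ, hφ, hlim⟩ := isCompact_Icc.tendsto_subseq hbox
    exact ⟨φ, hφ, l, hlim⟩
  intro xh φ hφ hxφ hd
  have hyφ : Tendsto (fun k => y (φ k)) atTop (𝓝 xh) := by
    simpa [hy, Pi.add_def] using
      hxφ.add ((tendsto_mul_pi_of_tendsto_zero_of_bounded hβ0 hvbd).comp hφ.tendsto_atTop)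
  obtain ⟨L, hL⟩ : ∃ L, Tendsto (fun k => IAb A b (x k)) atTop (𝓝 L) :=
    ⟨_, tendsto_atTop_ciInf hmono
      ⟨0, Set.forall_mem_range.2 fun k => IAb_nonneg (fun i => (hb i).le) (dd_pos hA hrow (hx k))⟩⟩
  have hLxh : IAb A b xh = L :=
    tendsto_nhds_unique ((continuousAt_IAb hb hd).tendsto.comp hxφ) (hL.comp hφ.tendsto_atTop)
  refine EMop_eq_self_of_tendsto hA hcol hrow hb (fun k => hypos (φ k)) hyφ hd ?_
  have hnext := (hL.comp (tendsto_add_atTop_nat 1)).comp hφ.tendsto_atTop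
  simp only [Function.comp_def, hiter] at hnext
  simpa [hLxh] using ((continuousAt_IAb hb hd).tendsto.comp hyφ).sub hnext

theorem stmt_9
    (M N : ℕ) (hM : 0 < M) (hN : 0 < N)
    (A : Fin M → Fin N → ℝ) (b : Fin M → ℝ)
    (hA : ∀ i j, 0 ≤ A i j)
    (hcol : ∀ j, ∑ i, A i j = 1)
    (hrow : ∀ i, ∃ j, 0 < A i j)
    (hb : ∀ i, 0 < b i)
    (x y : ℕ → Fin N → ℝ) (β : ℕ → ℝ) (v : ℕ → Fin N → ℝ)
    (hx : ∀ k j, 0 < x k j)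
    (hmass : ∀ k, (∑ j, x k j) = ∑ i, b i)
    (hy : ∀ k, y k = fun j => x k j + β k * v k j)
    (hypos : ∀ k j, 0 < y k j)
    (hiter : ∀ k, x (k + 1) = EMop A b (y k))
    (hβ : ∀ k, 0 ≤ β k)
    (hβ0 : Tendsto β atTop (nhds 0))
    (hvbd : ∃ C : ℝ, ∀ k j, |v k j| ≤ C)
    (hmono : Antitone (fun k => IAb A b (x k))) :
    (∃ φ : ℕ → ℕ, StrictMono φ ∧ ∃ l : Fin N → ℝ,
      Tendsto (fun k => x (φ k)) atTop (nhds l)) ∧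
    (∀ xh : Fin N → ℝ, ∀ φ : ℕ → ℕ, StrictMono φ →
      Tendsto (fun k => x (φ k)) atTop (nhds xh) →
      (∀ i, 0 < dd A xh i) → EMop A b xh = xh) :=
  stmt_9_general M N A b hA hcol hrow hb x y β v hx hmass hy hypos hiter hβ0 hvbd hmono
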